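/- Let a, n be positive integers with 1 ≤ a < n and gcd(a,n) = 1. Then | (V(a,n) + 1) − (n/a)·Σ_{s=1}^{a} φ(s)/s | ≤ Σ_{d=1}^{a} μ(d)²·⌊a/d⌋ ≤ a·(1 + log a), where the inequality is between real numbers and log is the natural logarithm. In particular the error term is O(a·log a), so if a = O(n^{1−ε}) then V(a,n)/n = (1/a)·Σ_{s=1}^{a} φ(s)/s + o(1). -/

import Mathlib

/-!
The lattice points of `P_{a,n}` with first coordinate `x` are the `y` with
`(x - 1)n < ay < xn`. Closing the top edge adds only the corner `(a, n)`, because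
`gcd(a, n) = 1`, and then column `x` (for `1 ≤ x ≤ a`) is the interval
`(x - 1)n/a < y ≤ xn/a`. By Möbius inversion the number of `y` coprime to `x` in such an
interval is `Σ_{d ∣ x} μ(d)(⌊xn/(ad)⌋ - ⌊(x - 1)n/(ad)⌋)`, which differs from
`(n/a)·Σ_{d ∣ x} μ(d)/d = (n/a)·φ(x)/x` by at most one for each squarefree `d ∣ x`.
Summing over the columns and exchanging the sums gives the error `Σ_{d ≤ a} μ(d)²⌊a/d⌋`,
at most `a·H_a ≤ a(1 + log a)`; divided by `n` this is `O(n^{-ε} log n)` when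
`a = O(n^{1-ε})`.
-/

/-- `(x, y) ∈ ℤ²` lies in the interior of the lattice parallelogram
`P_{a,n} = {t₁·(1,0) + t₂·(a,n) : 0 ≤ t₁, t₂ ≤ 1}`. -/
def inInteriorP (a n : ℤ) (p : ℤ × ℤ) : Prop :=
  ∃ t₁ t₂ : ℝ, 0 < t₁ ∧ t₁ < 1 ∧ 0 < t₂ ∧ t₂ < 1 ∧
    (p.1 : ℝ) = t₁ + t₂ * (a : ℝ) ∧ (p.2 : ℝ) = t₂ * (n : ℝ)

/-- A lattice point `(x, y) ∈ ℤ²` is visible (from the origin) if `gcd(x, y) = 1`. -/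
def VisiblePt (p : ℤ × ℤ) : Prop := Int.gcd p.1 p.2 = 1

/-- `V a n` is the number of visible lattice points in the interior of `P_{a,n}`. -/
noncomputable def V (a n : ℤ) : ℕ :=
  {p : ℤ × ℤ | inInteriorP a n p ∧ VisiblePt p}.ncard

open Finset ArithmeticFunction ArithmeticFunction.Moebius
open scoped Nat

theorem sum_divisors_moebius (n : ℕ) : ∑ d ∈ n.divisors, μ d = if n = 1 then 1 else 0 := by
  rw [← coe_mul_zeta_apply, moebius_mul_coe_zeta, one_apply]

theorem totient_div_self_eq_sum_moebius_div {x : ℕ} (hx : x ≠ 0) :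
    (φ x : ℝ) / x = ∑ d ∈ x.divisors, (μ d : ℝ) / d := by
  have hinv := (sum_eq_iff_sum_mul_moebius_eq (f := fun m => (φ m : ℝ)) (g := fun m => (m : ℝ))).mp
    (fun m _ => by exact_mod_cast Nat.sum_totient m) x (Nat.pos_of_ne_zero hx)
  rw [← hinv, Nat.sum_divisorsAntidiagonal (fun d e => (μ d : ℝ) * e), sum_div]
  refine sum_congr rfl fun d hd => ?_
  have hd0 : (d : ℝ) ≠ 0 := by exact_mod_cast (Nat.pos_of_mem_divisors hd).ne'
  rw [Nat.cast_div (Nat.dvd_of_mem_divisors hd) hd0]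
  field_simp

theorem divisors_gcd_eq_filter {x : ℕ} (hx : x ≠ 0) (y : ℤ) :
    (Int.gcd x y).divisors = {d ∈ x.divisors | ((d : ℕ) : ℤ) ∣ y} := by
  ext d
  simp [Int.gcd_def, Nat.dvd_gcd_iff, Int.natCast_dvd, hx, Nat.gcd_eq_zero_iff]

theorem card_filter_dvd_Ioc {d : ℕ} (hd : d ≠ 0) {L R : ℤ} (hLR : L ≤ R) :
    (#{y ∈ Ioc L R | (d : ℤ) ∣ y} : ℤ) = R / d - L / d := by
  have hpos : (0 : ℤ) < d := by exact_mod_cast Nat.pos_of_ne_zero hd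
  rw [Int.Ioc_filter_dvd_card _ _ hpos, Int.cast_natCast, Int.floor_div_natCast,
    Int.floor_div_natCast, Int.floor_intCast, Int.floor_intCast,
    max_eq_left (sub_nonneg.mpr (Int.ediv_le_ediv hpos hLR))]

theorem card_filter_gcd_eq_one_Ioc {x : ℕ} (hx : x ≠ 0) {L R : ℤ} (hLR : L ≤ R) :
    (#{y ∈ Ioc L R | Int.gcd x y = 1} : ℤ) = ∑ d ∈ x.divisors, μ d * (R / d - L / d) := by
  calc (#{y ∈ Ioc L R | Int.gcd x y = 1} : ℤ)
      = ∑ y ∈ Ioc L R, ∑ d ∈ x.divisors, if (d : ℤ) ∣ y then μ d else 0 := by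
        rw [card_filter, Nat.cast_sum]
        refine sum_congr rfl fun y _ => ?_
        rw [← sum_filter, ← divisors_gcd_eq_filter hx, sum_divisors_moebius]
        split_ifs <;> rfl
    _ = ∑ d ∈ x.divisors, μ d * (R / d - L / d) := by
        rw [sum_comm]
        refine sum_congr rfl fun d hd => ?_
        rw [← sum_filter, sum_const, nsmul_eq_mul, mul_comm,
          card_filter_dvd_Ioc (Nat.pos_of_mem_divisors hd).ne' hLR]

theorem abs_floor_sub_floor_sub_sub_le_one (u v : ℝ) :
    |((⌊u⌋ - ⌊v⌋ : ℤ) : ℝ) - (u - v)| ≤ 1 := by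
  have hu := Int.fract_nonneg u
  have hu' := Int.fract_lt_one u
  have hv := Int.fract_nonneg v
  have hv' := Int.fract_lt_one v
  rw [Int.fract] at hu hu' hv hv'
  rw [abs_le]; push_cast; constructor <;> linarith

theorem abs_card_filter_gcd_eq_one_Ioc_floor_sub_le {x : ℕ} (hx : x ≠ 0) {s t : ℝ}
    (hst : s ≤ t) :
    |(#{y ∈ Ioc ⌊s⌋ ⌊t⌋ | Int.gcd x y = 1} : ℝ) - (t - s) * (φ x / x)| ≤
      ∑ d ∈ x.divisors, (μ d : ℝ) ^ 2 := by
  have hcard : (#{y ∈ Ioc ⌊s⌋ ⌊t⌋ | Int.gcd x y = 1} : ℝ) =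
      ∑ d ∈ x.divisors, (μ d : ℝ) * ((⌊t / d⌋ - ⌊s / d⌋ : ℤ) : ℝ) := by
    rw [← Int.cast_natCast, card_filter_gcd_eq_one_Ioc hx (Int.floor_mono hst)]
    push_cast [Int.floor_div_natCast]
    rfl
  rw [hcard, totient_div_self_eq_sum_moebius_div hx, mul_sum, ← sum_sub_distrib]
  refine (abs_sum_le_sum_abs _ _).trans (sum_le_sum fun d _ => ?_)
  calc |(μ d : ℝ) * ((⌊t / d⌋ - ⌊s / d⌋ : ℤ) : ℝ) - (t - s) * ((μ d : ℝ) / d)|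
      = |(μ d : ℝ)| * |((⌊t / d⌋ - ⌊s / d⌋ : ℤ) : ℝ) - (t / d - s / d)| := by
        rw [← abs_mul]; ring_nf
    _ ≤ |(μ d : ℝ)| * 1 :=
        mul_le_mul_of_nonneg_left (abs_floor_sub_floor_sub_sub_le_one _ _) (abs_nonneg _)
    _ ≤ (μ d : ℝ) ^ 2 := by
        rw [mul_one, ← Int.cast_abs, Int.abs_eq_natAbs]
        exact_mod_cast Int.natAbs_le_self_sq (μ d)

theorem sum_Icc_sum_divisors {M : Type*} [AddCommMonoid M] (a : ℕ) (f : ℕ → M) :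
    ∑ x ∈ Icc 1 a, ∑ d ∈ x.divisors, f d = ∑ d ∈ Icc 1 a, (a / d) • f d := by
  rw [sum_comm' (t' := Icc 1 a) (s' := fun d => {x ∈ Ioc 0 a | d ∣ x})]
  · simp only [sum_const, Nat.Ioc_filter_dvd_card_eq_div]
  · intro x d
    simp only [mem_Icc, Nat.mem_divisors, mem_filter, mem_Ioc]
    constructor
    · rintro ⟨⟨hx1, hxa⟩, hdx, -⟩
      exact ⟨⟨⟨hx1, hxa⟩, hdx⟩, Nat.pos_of_dvd_of_pos hdx hx1, (Nat.le_of_dvd hx1 hdx).trans hxa⟩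
    · rintro ⟨⟨⟨hx0, hxa⟩, hdx⟩, -⟩
      exact ⟨⟨hx0, hxa⟩, hdx, by omega⟩

theorem sum_moebius_sq_mul_floor_le (a : ℕ) :
    ∑ d ∈ Icc 1 a, (μ d : ℝ) ^ 2 * (⌊(a : ℝ) / d⌋ : ℝ) ≤ a * (1 + Real.log a) := by
  calc ∑ d ∈ Icc 1 a, (μ d : ℝ) ^ 2 * (⌊(a : ℝ) / d⌋ : ℝ)
      ≤ ∑ d ∈ Icc 1 a, (a : ℝ) * (d : ℝ)⁻¹ := by
        refine sum_le_sum fun d _ => ?_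
        have hμ : (μ d : ℝ) ^ 2 ≤ 1 := by
          rw [sq_le_one_iff_abs_le_one]; exact_mod_cast abs_moebius_le_one
        have hfloor : (0 : ℝ) ≤ ⌊(a : ℝ) / d⌋ := by
          exact_mod_cast Int.floor_nonneg.mpr (by positivity)
        calc (μ d : ℝ) ^ 2 * (⌊(a : ℝ) / d⌋ : ℝ) ≤ 1 * ((a : ℝ) / d) :=
              mul_le_mul hμ (Int.floor_le _) hfloor zero_le_one
          _ = a * (d : ℝ)⁻¹ := by ring
    _ = a * (harmonic a : ℝ) := by
        rw [← mul_sum, harmonic_eq_sum_Icc]; push_cast; rfl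
    _ ≤ a * (1 + Real.log a) := by gcongr; exact harmonic_le_one_add_log a

theorem inInteriorP_iff {a n : ℤ} (hn : 0 < n) (x y : ℤ) :
    inInteriorP a n (x, y) ↔ 0 < y ∧ y < n ∧ (x - 1) * n < a * y ∧ a * y < x * n := by
  have hn' : (0 : ℝ) < n := by exact_mod_cast hn
  suffices inInteriorP a n (x, y) ↔
      (0 : ℝ) < y ∧ (y : ℝ) < n ∧ ((x : ℝ) - 1) * n < a * y ∧ (a : ℝ) * y < x * n by
    rw [this]; norm_cast
  constructor
  · rintro ⟨t₁, t₂, h₁, h₁', h₂, h₂', hx, hy⟩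
    simp only at hx hy
    rw [hx, hy]
    refine ⟨by positivity, by nlinarith, by nlinarith, by nlinarith⟩
  · rintro ⟨hy, hyn, hlow, hup⟩
    refine ⟨x - a * y / n, y / n, ?_, ?_, by positivity, (div_lt_one hn').mpr hyn, ?_, ?_⟩
    · rw [sub_pos, div_lt_iff₀ hn']; linarith
    · rw [sub_lt_iff_lt_add, ← sub_lt_iff_lt_add', lt_div_iff₀ hn']; linarith
    · field_simp; ring
    · field_simp

theorem eq_or_interior_iff {a n : ℤ} (ha : 0 < a) (hn : 0 < n) (hcop : IsCoprime a n)
    {x y : ℤ} :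
    (x, y) = (a, n) ∨ (0 < y ∧ y < n ∧ (x - 1) * n < a * y ∧ a * y < x * n) ↔
      1 ≤ x ∧ x ≤ a ∧ (x - 1) * n < a * y ∧ a * y ≤ x * n := by
  constructor
  · rintro (h | ⟨hy, hyn, hlow, hup⟩)
    · obtain ⟨rfl, rfl⟩ := Prod.mk.inj h
      refine ⟨ha, le_rfl, by nlinarith, le_rfl⟩
    · refine ⟨?_, ?_, hlow, hup.le⟩
      · by_contra! hx; nlinarith
      · by_contra! hx; nlinarith
  · rintro ⟨hx, hxa, hlow, hup⟩
    rcases hup.lt_or_eq with hup | heq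
    · exact Or.inr ⟨by nlinarith, by nlinarith, hlow, hup⟩
    · have hax : a ∣ x := hcop.dvd_of_dvd_mul_right ⟨y, by rw [← heq]⟩
      obtain rfl : x = a := le_antisymm hxa (Int.le_of_dvd (by omega) hax)
      obtain rfl : y = n := by nlinarith
      exact Or.inl rfl

noncomputable def visibleColumn (a n x : ℕ) : Finset ℤ :=
  {y ∈ Ioc ⌊((x : ℝ) - 1) * n / a⌋ ⌊(x : ℝ) * n / a⌋ | Int.gcd x y = 1}

theorem mem_visibleColumn {a n x : ℕ} (ha : 0 < a) {y : ℤ} :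
    y ∈ visibleColumn a n x ↔
      ((x : ℤ) - 1) * n < a * y ∧ (a : ℤ) * y ≤ x * n ∧ Int.gcd x y = 1 := by
  have ha' : (0 : ℝ) < a := by exact_mod_cast ha
  simp only [visibleColumn, mem_filter, mem_Ioc, Int.floor_lt, Int.le_floor, div_lt_iff₀ ha',
    le_div_iff₀ ha', and_assoc]
  norm_cast
  simp only [mul_comm]

theorem V_add_one_eq_sum_card_visibleColumn {a n : ℕ} (ha : 0 < a) (hn : 0 < n)
    (hgcd : a.gcd n = 1) :
    V a n + 1 = ∑ x ∈ Icc 1 a, #(visibleColumn a n x) := by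
  have hcop : IsCoprime (a : ℤ) n := Int.isCoprime_iff_gcd_eq_one.mpr (by simpa using hgcd)
  set F : Finset (ℤ × ℤ) := ((Icc 1 a).sigma (visibleColumn a n)).map
    ⟨fun p => ((p.1 : ℤ), p.2), by rintro ⟨x, y⟩ ⟨x', y'⟩ h; simp_all⟩ with hF_def
  have hF : ∀ p : ℤ × ℤ, p ∈ F ↔ p = ((a : ℤ), (n : ℤ)) ∨ (inInteriorP a n p ∧ VisiblePt p) := by
    rintro ⟨x, y⟩
    have hcorner : (x, y) = ((a : ℤ), (n : ℤ)) → Int.gcd x y = 1 := by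
      rintro ⟨⟩; simpa using hgcd
    rw [VisiblePt, inInteriorP_iff (by exact_mod_cast hn), ← and_iff_left_of_imp hcorner,
      ← or_and_right, eq_or_interior_iff (by exact_mod_cast ha) (by exact_mod_cast hn) hcop]
    simp only [hF_def, mem_map, Sigma.exists, mem_sigma, mem_Icc, mem_visibleColumn ha]
    constructor
    · rintro ⟨x, y, ⟨⟨hx, hxa⟩, hlow, hup, hxy⟩, ⟨⟩⟩
      exact ⟨⟨by exact_mod_cast hx, by exact_mod_cast hxa, hlow, hup⟩, hxy⟩
    · rintro ⟨⟨hx, hxa, hlow, hup⟩, hxy⟩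
      lift x to ℕ using by omega
      exact ⟨x, y, ⟨⟨by exact_mod_cast hx, by exact_mod_cast hxa⟩, hlow, hup, hxy⟩, rfl⟩
  have hcorner : ¬ inInteriorP a n (a, n) := by
    simp [inInteriorP_iff (by exact_mod_cast hn : (0 : ℤ) < n)]
  have hS : {p : ℤ × ℤ | inInteriorP a n p ∧ VisiblePt p} = ↑(F.erase (a, n)) := by
    ext p
    simp only [Set.mem_ofPred_eq, coe_erase, Set.mem_sdiff, mem_coe, hF, Set.mem_singleton_iff]
    constructor
    · exact fun h => ⟨Or.inr h, by rintro rfl; exact hcorner h.1⟩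
    · rintro ⟨h | h, hne⟩
      exacts [absurd h hne, h]
  rw [V, hS, Set.ncard_coe_finset, card_erase_of_mem ((hF _).2 (Or.inl rfl)), Nat.sub_add_cancel
    (card_pos.mpr ⟨_, (hF _).2 (Or.inl rfl)⟩), hF_def, card_map, card_sigma]

open Filter Asymptotics Topology

theorem tendsto_one_add_log_div_rpow_atTop {ε : ℝ} (hε : 0 < ε) :
    Tendsto (fun x : ℝ => (1 + Real.log x) / x ^ ε) atTop (𝓝 0) := by
  have hone : (fun _ : ℝ => (1 : ℝ)) =o[atTop] fun x => x ^ ε := by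
    rw [isLittleO_one_left_iff]
    exact tendsto_norm_atTop_atTop.comp (tendsto_rpow_atTop hε)
  exact (hone.add (isLittleO_log_rpow_atTop hε)).tendsto_div_nhds_zero

theorem abs_V_add_one_sub_le {a n : ℕ} (ha : 0 < a) (hn : 0 < n) (hgcd : a.gcd n = 1) :
    |((V a n : ℝ) + 1) - n / a * ∑ s ∈ Icc 1 a, (φ s : ℝ) / s| ≤
      ∑ d ∈ Icc 1 a, (μ d : ℝ) ^ 2 * (⌊(a : ℝ) / d⌋ : ℝ) := by
  have hcol : ∀ x ∈ Icc 1 a,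
      |(#(visibleColumn a n x) : ℝ) - n / a * (φ x / x)| ≤ ∑ d ∈ x.divisors, (μ d : ℝ) ^ 2 := by
    intro x hx
    have hx0 : x ≠ 0 := by rw [mem_Icc] at hx; omega
    have key := abs_card_filter_gcd_eq_one_Ioc_floor_sub_le hx0
      (s := ((x : ℝ) - 1) * n / a) (t := (x : ℝ) * n / a) (by gcongr; linarith)
    rwa [show (n : ℝ) / a = x * n / a - (x - 1) * n / a by ring]
  have hV : (V a n : ℝ) + 1 = ∑ x ∈ Icc 1 a, (#(visibleColumn a n x) : ℝ) := by
    exact_mod_cast V_add_one_eq_sum_card_visibleColumn ha hn hgcd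
  calc |((V a n : ℝ) + 1) - n / a * ∑ s ∈ Icc 1 a, (φ s : ℝ) / s|
      = |∑ x ∈ Icc 1 a, ((#(visibleColumn a n x) : ℝ) - n / a * (φ x / x))| := by
        rw [hV, sum_sub_distrib, mul_sum]
    _ ≤ ∑ x ∈ Icc 1 a, ∑ d ∈ x.divisors, (μ d : ℝ) ^ 2 :=
        (abs_sum_le_sum_abs _ _).trans (sum_le_sum hcol)
    _ = ∑ d ∈ Icc 1 a, (μ d : ℝ) ^ 2 * (⌊(a : ℝ) / d⌋ : ℝ) := by
        rw [sum_Icc_sum_divisors]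
        refine sum_congr rfl fun d _ => ?_
        rw [nsmul_eq_mul, Int.floor_div_natCast, Int.floor_natCast, ← Int.natCast_div,
          Int.cast_natCast, mul_comm]

theorem tendsto_V_div_sub_atTop {ε : ℝ} (hε : 0 < ε) (A : ℕ → ℕ)
    (hA : ∀ m : ℕ, 2 ≤ m → 1 ≤ A m ∧ A m < m ∧ Nat.gcd (A m) m = 1)
    (hO : (fun m : ℕ => (A m : ℝ)) =O[atTop] (fun m : ℕ => (m : ℝ) ^ (1 - ε))) :
    Tendsto (fun m : ℕ => (V (A m) m : ℝ) / m -
      1 / (A m : ℝ) * ∑ s ∈ Icc 1 (A m), (φ s : ℝ) / s) atTop (𝓝 0) := by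
  have hbound : ∀ᶠ m : ℕ in atTop, ‖(V (A m) m : ℝ) / m -
      1 / (A m : ℝ) * ∑ s ∈ Icc 1 (A m), (φ s : ℝ) / s‖ ≤
        A m * ((1 + Real.log m) / m) + 1 / m := by
    filter_upwards [eventually_ge_atTop 2] with m hm
    obtain ⟨hA1, hAm, hgcd⟩ := hA m hm
    have hm0 : (0 : ℝ) < m := by positivity
    have hA0 : (0 : ℝ) < A m := by exact_mod_cast hA1
    have herr := (abs_V_add_one_sub_le hA1 (by omega) hgcd).trans (sum_moebius_sq_mul_floor_le _)
    have hlog : Real.log (A m) ≤ Real.log m := Real.log_le_log hA0 (by exact_mod_cast hAm.le)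
    have hsplit : (V (A m) m : ℝ) / m - 1 / (A m : ℝ) * ∑ s ∈ Icc 1 (A m), (φ s : ℝ) / s =
        ((((V (A m) m : ℝ) + 1) - m / A m * ∑ s ∈ Icc 1 (A m), (φ s : ℝ) / s) - 1) / m := by
      field_simp; ring
    rw [hsplit, Real.norm_eq_abs, abs_div, abs_of_pos hm0, mul_div_assoc', ← add_div]
    gcongr
    calc _ ≤ |((V (A m) m : ℝ) + 1) - m / A m * ∑ s ∈ Icc 1 (A m), (φ s : ℝ) / s| + |(1 : ℝ)| :=
          abs_sub _ _
      _ ≤ A m * (1 + Real.log m) + 1 := by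
          rw [abs_one]; gcongr; exact herr.trans (by gcongr)
  refine squeeze_zero_norm' hbound ?_
  have hmain : (fun m : ℕ => (A m : ℝ) * ((1 + Real.log m) / m)) =O[atTop]
      fun m : ℕ => (1 + Real.log m) / (m : ℝ) ^ ε := by
    refine (hO.mul (isBigO_refl (fun m : ℕ => (1 + Real.log m) / m) atTop)).trans_eventuallyEq ?_
    filter_upwards [eventually_gt_atTop 0] with m hm
    rw [Real.rpow_sub (by exact_mod_cast hm), Real.rpow_one]
    field_simp
  simpa using (hmain.trans_tendsto ((tendsto_one_add_log_div_rpow_atTop hε).comp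
    tendsto_natCast_atTop_atTop)).add (tendsto_one_div_atTop_nhds_zero_nat)

open ArithmeticFunction ArithmeticFunction.Moebius Filter in
/-- The error term in the approximation `V(a,n) + 1 ≈ (n/a)·Σ_{s=1}^{a} φ(s)/s`
is at most `Σ_{d=1}^{a} μ(d)²·⌊a/d⌋ ≤ a·(1 + log a)`.  In particular, if
`a = O(n^{1−ε})` along a sequence then `V(a,n)/n − (1/a)·Σ_{s=1}^{a} φ(s)/s → 0`. -/
theorem V_error_bound (a n : ℕ) (ha : 1 ≤ a) (han : a < n)
    (hgcd : Nat.gcd a n = 1) :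
    (|((V a n : ℝ) + 1) - (n : ℝ) / (a : ℝ) *
          ∑ s ∈ Finset.Icc 1 a, (Nat.totient s : ℝ) / (s : ℝ)| ≤
        ∑ d ∈ Finset.Icc 1 a, (μ d : ℝ) ^ 2 * (⌊(a : ℝ) / (d : ℝ)⌋ : ℝ) ∧
      ∑ d ∈ Finset.Icc 1 a, (μ d : ℝ) ^ 2 * (⌊(a : ℝ) / (d : ℝ)⌋ : ℝ) ≤
        (a : ℝ) * (1 + Real.log a)) ∧
    ∀ (ε : ℝ), 0 < ε → ε < 1 →
      ∀ A : ℕ → ℕ,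
        (∀ m : ℕ, 2 ≤ m → 1 ≤ A m ∧ A m < m ∧ Nat.gcd (A m) m = 1) →
        (fun m : ℕ => (A m : ℝ)) =O[atTop] (fun m : ℕ => (m : ℝ) ^ (1 - ε)) →
        Tendsto
          (fun m : ℕ => (V (A m) m : ℝ) / (m : ℝ) -
            1 / (A m : ℝ) * ∑ s ∈ Finset.Icc 1 (A m), (Nat.totient s : ℝ) / (s : ℝ))
          atTop (nhds 0) :=
  ⟨⟨abs_V_add_one_sub_le ha (by omega) hgcd, sum_moebius_sq_mul_floor_le a⟩,
    fun _ hε _ => tendsto_V_div_sub_atTop hε⟩
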